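/- For all m ≥ 2, ∑_{k=0}^{m} k!·C(m-1,k-1) = m·S(m-1) - (m-1)·S(m-2), where S(m) = ∑_{k=0}^{m} k!·C(m,k) and C(n,-1) = 0. -/

import Mathlib

def S (m : ℕ) : ℕ := ∑ k ∈ Finset.range (m + 1), (Nat.factorial k) * Nat.choose m k

/-!
`k! * C(m, k)` is the falling factorial `m (m-1) ⋯ (m-k+1)`, so `S` satisfies the arrangement
recurrence `S (n+1) = (n+1) * S n + 1`. Pascal's rule shows that the left-hand side, a sum over
`C(m-1, k-1)`, is the difference `S m - S (m-1)`, and the recurrence turns both sides into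
`(m-1) * S (m-1) + 1`.
-/

open Finset Nat

lemma S_eq_sum_descFactorial (m : ℕ) : S m = ∑ k ∈ range (m + 1), m.descFactorial k := by
  simp only [S, descFactorial_eq_factorial_mul_choose]

lemma S_succ (n : ℕ) : S (n + 1) = (n + 1) * S n + 1 := by
  rw [S_eq_sum_descFactorial, S_eq_sum_descFactorial, sum_range_succ', mul_sum]
  simp only [succ_descFactorial_succ, descFactorial_zero]

lemma S_add_sum_factorial_succ_mul_choose (n : ℕ) :
    S n + ∑ j ∈ range (n + 1), (j + 1)! * n.choose j = S (n + 1) := by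
  have hS : S n = ∑ k ∈ range (n + 2), k ! * n.choose k := by
    rw [S, sum_range_succ _ (n + 1), choose_succ_self, mul_zero, add_zero]
  rw [hS, S, sum_range_succ', sum_range_succ' _ (n + 1)]
  simp only [choose_succ_succ', choose_zero_right, mul_add, sum_add_distrib]
  ring

lemma sum_factorial_succ_mul_choose (n : ℕ) :
    ∑ j ∈ range (n + 1), (j + 1)! * n.choose j = n * S n + 1 := by
  have h := S_add_sum_factorial_succ_mul_choose n
  rw [S_succ] at h
  linarith

theorem shifted_sum : ∀ m : ℕ, 2 ≤ m →
    (∑ k ∈ Finset.range (m + 1),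
        ((Nat.factorial k) : ℤ) * (if k = 0 then 0 else Nat.choose (m - 1) (k - 1))) =
      (m : ℤ) * S (m - 1) - ((m : ℤ) - 1) * S (m - 2) := by
  intro m hm
  obtain ⟨n, rfl⟩ : ∃ n, m = n + 2 := ⟨m - 2, by omega⟩
  have hLHS : ∑ k ∈ range (n + 2 + 1),
        (k ! : ℤ) * ((if k = 0 then 0 else (n + 2 - 1).choose (k - 1) : ℕ) : ℤ) =
      ((∑ j ∈ range (n + 1 + 1), (j + 1)! * (n + 1).choose j : ℕ) : ℤ) := by
    rw [sum_range_succ']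
    push_cast
    simp
  rw [hLHS, sum_factorial_succ_mul_choose, show n + 2 - 1 = n + 1 by omega,
    show n + 2 - 2 = n by omega, S_succ]
  push_cast
  ring
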